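/- Let Φ be an m×n real matrix, b ∈ ℝᵐ, and let x* ∈ ℝⁿ be a solution of (P₀): Φx* = b and ‖x*‖₀ ≤ ‖x‖₀ for every x with Φx = b. Let ŵ ∈ ℝⁿ satisfy ŵᵢ ≥ 0 for all i and (ŵᵢ = 0 ⟺ x*ᵢ ≠ 0). Then every minimizer x^ŵ of the weighted ℓ₁ problem with weights ŵ (i.e., Φx^ŵ = b and Σᵢ ŵᵢ|x^ŵᵢ| ≤ Σᵢ ŵᵢ|xᵢ| for all x with Φx = b) is itself a solution of (P₀): ‖x^ŵ‖₀ ≤ ‖x‖₀ for every x with Φx = b. -/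

import Mathlib

/-!
Since `ŵ` vanishes on the support of `x*`, the weighted ℓ₁ norm of `x*` is `0`, so any weighted
ℓ₁ minimizer has weighted ℓ₁ norm `0` as well and must vanish wherever `ŵ > 0`, i.e. off the
support of `x*`. Its support is therefore contained in that of `x*`, and its ℓ₀ norm is at most
the optimal value of (P₀).
-/

/-- The ℓ₀ pseudo-norm: the number of nonzero coordinates of `x`. -/
noncomputable def normZero {n : ℕ} (x : Fin n → ℝ) : ℕ :=
  (Finset.univ.filter fun i => x i ≠ 0).card

theorem normZero_mono {n : ℕ} {x y : Fin n → ℝ} (h : ∀ i, x i ≠ 0 → y i ≠ 0) :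
    normZero x ≤ normZero y :=
  Finset.card_le_card fun i hi => by
    simp only [Finset.mem_filter, Finset.mem_univ, true_and] at hi ⊢
    exact h i hi

section WeightedL1

variable {ι : Type*} [Fintype ι] {w x y : ι → ℝ}

theorem weighted_sum_abs_eq_zero (h : ∀ i, x i ≠ 0 → w i = 0) :
    ∑ i, w i * |x i| = 0 :=
  Finset.sum_eq_zero fun i _ => by
    by_cases hx : x i = 0
    · simp [hx]
    · simp [h i hx]

theorem eq_zero_of_weighted_sum_abs_nonpos (hw : ∀ i, 0 ≤ w i)
    (h : ∑ i, w i * |x i| ≤ 0) {i : ι} (hi : w i ≠ 0) : x i = 0 := by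
  have hnonneg : ∀ j ∈ Finset.univ, 0 ≤ w j * |x j| := fun j _ =>
    mul_nonneg (hw j) (abs_nonneg _)
  have hterm : w i * |x i| = 0 :=
    (Finset.sum_eq_zero_iff_of_nonneg hnonneg).mp
      (le_antisymm h (Finset.sum_nonneg hnonneg)) i (Finset.mem_univ i)
  exact abs_eq_zero.mp ((mul_eq_zero.mp hterm).resolve_left hi)

theorem support_subset_of_weighted_sum_abs_le (hw : ∀ i, 0 ≤ w i)
    (hw0 : ∀ i, w i = 0 ↔ x i ≠ 0) (hle : ∑ i, w i * |y i| ≤ ∑ i, w i * |x i|) :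
    ∀ i, y i ≠ 0 → x i ≠ 0 := by
  intro i hy
  by_contra hx
  have hnorm : ∑ i, w i * |x i| = 0 := weighted_sum_abs_eq_zero fun j => (hw0 j).mpr
  have hwi : w i ≠ 0 := fun h => (hw0 i).mp h hx
  exact hy (eq_zero_of_weighted_sum_abs_nonpos hw (hnorm ▸ hle) hwi)

end WeightedL1

theorem weighted_l1_solves_P0_general {m n : ℕ} (Φ : Matrix (Fin m) (Fin n) ℝ)
    (b : Fin m → ℝ) (xs : Fin n → ℝ) (hxs : Φ.mulVec xs = b)
    (hxs0 : ∀ x : Fin n → ℝ, Φ.mulVec x = b → normZero xs ≤ normZero x)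
    (wh : Fin n → ℝ) (hwh : ∀ i, 0 ≤ wh i) (hwh0 : ∀ i, wh i = 0 ↔ xs i ≠ 0)
    (xw : Fin n → ℝ)
    (hmin : ∀ x : Fin n → ℝ, Φ.mulVec x = b →
      ∑ i, wh i * |xw i| ≤ ∑ i, wh i * |x i|) :
    ∀ x : Fin n → ℝ, Φ.mulVec x = b → normZero xw ≤ normZero x := fun x hx =>
  (normZero_mono (support_subset_of_weighted_sum_abs_le hwh hwh0 (hmin xs hxs))).trans
    (hxs0 x hx)

/-- If `x*` solves (P₀) and `ŵ ≥ 0` vanishes exactly on the support of `x*`,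
then every minimizer of the weighted ℓ₁ problem with weights `ŵ` also
solves (P₀). -/
theorem weighted_l1_solves_P0 {m n : ℕ} (Φ : Matrix (Fin m) (Fin n) ℝ)
    (b : Fin m → ℝ) (xs : Fin n → ℝ) (hxs : Φ.mulVec xs = b)
    (hxs0 : ∀ x : Fin n → ℝ, Φ.mulVec x = b → normZero xs ≤ normZero x)
    (wh : Fin n → ℝ) (hwh : ∀ i, 0 ≤ wh i) (hwh0 : ∀ i, wh i = 0 ↔ xs i ≠ 0)
    (xw : Fin n → ℝ) (hxw : Φ.mulVec xw = b)
    (hmin : ∀ x : Fin n → ℝ, Φ.mulVec x = b →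
      ∑ i, wh i * |xw i| ≤ ∑ i, wh i * |x i|) :
    ∀ x : Fin n → ℝ, Φ.mulVec x = b → normZero xw ≤ normZero x :=
  weighted_l1_solves_P0_general Φ b xs hxs hxs0 wh hwh hwh0 xw hmin
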